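/- The function ψ(λ) = 4·K(√λ), defined for real λ with 0 < λ < 1, satisfies the Picard–Fuchs differential equation 4λ(1−λ)·ψ''(λ) + 4(1−2λ)·ψ'(λ) − ψ(λ) = 0 on the interval (0,1). -/

import Mathlib

/-!
Substituting `x = √λ` gives `ψ(λ) = 4 K₀(λ)`, where `Kₙ = legendreMoment n` is
`Kₙ(λ) = ∫₀¹ t^{2n} (1 - λt²)^{-(n+1/2)} / √(1 - t²) dt`. Differentiating under the integral
sign (dominated by a multiple of the integrable `1/√(1 - t²)` while `λ` stays away from `1`)
gives `Kₙ' = (n + 1/2) Kₙ₊₁`, so the Picard–Fuchs operator applied to `ψ` becomes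
`12λ(1-λ) K₂ + 8(1-2λ) K₁ - 4 K₀`. Its integrand is the `t`-derivative of
`-4t √(1 - t²) (1 - λt²)^{-3/2}`, which vanishes at both ends of `[0, 1]`.
-/

/-- The complete elliptic integral of the first kind. -/
noncomputable def Kint (x : ℝ) : ℝ :=
  ∫ t in (0:ℝ)..1, 1 / Real.sqrt ((1 - t ^ 2) * (1 - x ^ 2 * t ^ 2))

/-- The period `ψ(λ) = 4 K(√λ)` of the Legendre family of elliptic curves. -/
noncomputable def psiPeriod (l : ℝ) : ℝ := 4 * Kint (Real.sqrt l)

open Real Set MeasureTheory intervalIntegral Filter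

noncomputable def legendreKernel (n : ℕ) (l t : ℝ) : ℝ :=
  t ^ (2 * n) * (1 - l * t ^ 2) ^ (-(n + 1 / 2 : ℝ)) / √(1 - t ^ 2)

noncomputable def legendreMoment (n : ℕ) (l : ℝ) : ℝ :=
  ∫ t in (0:ℝ)..1, legendreKernel n l t

lemma intervalIntegrable_one_div_sqrt_one_sub_sq :
    IntervalIntegrable (fun t : ℝ => 1 / √(1 - t ^ 2)) volume 0 1 :=
  intervalIntegrable_deriv_of_nonneg continuous_arcsin.continuousOn
    (fun t ht => by
      simp only [zero_le_one, min_eq_left, max_eq_right, mem_Ioo] at ht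
      exact hasDerivAt_arcsin (by linarith) ht.2.ne)
    (fun t _ => by positivity)

lemma measurable_legendreKernel (n : ℕ) (l : ℝ) : Measurable (legendreKernel n l) := by
  unfold legendreKernel; fun_prop

lemma hasDerivAt_legendreKernel (n : ℕ) {l t : ℝ} (h : 0 < 1 - l * t ^ 2) :
    HasDerivAt (fun y => legendreKernel n y t) ((n + 1 / 2) * legendreKernel (n + 1) l t) l := by
  have hbase : HasDerivAt (fun y => 1 - y * t ^ 2) (-t ^ 2) l := by
    simpa using ((hasDerivAt_id l).mul_const (t ^ 2)).const_sub 1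
  refine (((hbase.rpow_const (p := -(n + 1 / 2 : ℝ)) (Or.inl h.ne')).const_mul
    (t ^ (2 * n))).div_const (√(1 - t ^ 2))).congr_deriv ?_
  rw [show -(n + 1 / 2 : ℝ) - 1 = -((n + 1 : ℕ) + 1 / 2 : ℝ) by push_cast; ring]
  unfold legendreKernel
  ring

lemma norm_legendreKernel_le (n : ℕ) {c x t : ℝ} (hc : 0 < c) (hcx : c ≤ 1 - x * t ^ 2)
    (ht : t ∈ Icc (0:ℝ) 1) :
    ‖legendreKernel n x t‖ ≤ c ^ (-(n + 1 / 2 : ℝ)) * (1 / √(1 - t ^ 2)) := by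
  have hpow : t ^ (2 * n) ≤ 1 := pow_le_one₀ ht.1 ht.2
  have hrpow : (1 - x * t ^ 2) ^ (-(n + 1 / 2 : ℝ)) ≤ c ^ (-(n + 1 / 2 : ℝ)) :=
    rpow_le_rpow_of_nonpos hc hcx (by linarith [(n.cast_nonneg : (0:ℝ) ≤ n)])
  have hnonneg : 0 ≤ (1 - x * t ^ 2) ^ (-(n + 1 / 2 : ℝ)) := rpow_nonneg (hc.le.trans hcx) _
  have ht0 := ht.1
  calc ‖legendreKernel n x t‖
      = t ^ (2 * n) * (1 - x * t ^ 2) ^ (-(n + 1 / 2 : ℝ)) * (1 / √(1 - t ^ 2)) := by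
        rw [legendreKernel, norm_eq_abs, abs_of_nonneg (by positivity), div_eq_mul_one_div]
    _ ≤ 1 * c ^ (-(n + 1 / 2 : ℝ)) * (1 / √(1 - t ^ 2)) := by gcongr
    _ = c ^ (-(n + 1 / 2 : ℝ)) * (1 / √(1 - t ^ 2)) := by rw [one_mul]

lemma one_sub_mul_sq_pos {l t : ℝ} (hl : l < 1) (ht : t ∈ Icc (0:ℝ) 1) : 0 < 1 - l * t ^ 2 := by
  have : t ^ 2 ≤ 1 := pow_le_one₀ ht.1 ht.2
  rcases le_or_gt l 0 with h | h <;> nlinarith [sq_nonneg t]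

lemma min_le_one_sub_mul_sq {l x t : ℝ} (hx : x ∈ Metric.ball l ((1 - l) / 2))
    (ht : t ∈ Icc (0:ℝ) 1) : min 1 ((1 - l) / 2) ≤ 1 - x * t ^ 2 := by
  rw [Metric.mem_ball, dist_eq] at hx
  have hx' : (1 - l) / 2 ≤ 1 - x := by linarith [(abs_lt.mp hx).2]
  have ht2 : t ^ 2 ≤ 1 := pow_le_one₀ ht.1 ht.2
  nlinarith [sq_nonneg t, min_le_left 1 ((1 - l) / 2), min_le_right 1 ((1 - l) / 2)]

lemma norm_legendreKernel_le_of_mem_ball (n : ℕ) {l x t : ℝ} (hl : l < 1)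
    (hx : x ∈ Metric.ball l ((1 - l) / 2)) (ht : t ∈ Icc (0:ℝ) 1) :
    ‖legendreKernel n x t‖ ≤ min 1 ((1 - l) / 2) ^ (-(n + 1 / 2 : ℝ)) * (1 / √(1 - t ^ 2)) :=
  norm_legendreKernel_le n (lt_min one_pos (by linarith)) (min_le_one_sub_mul_sq hx ht) ht

lemma intervalIntegrable_legendreKernel (n : ℕ) {l : ℝ} (hl : l < 1) :
    IntervalIntegrable (legendreKernel n l) volume 0 1 := by
  refine (intervalIntegrable_one_div_sqrt_one_sub_sq.const_mul
    (min 1 ((1 - l) / 2) ^ (-(n + 1 / 2 : ℝ)))).mono_fun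
    (measurable_legendreKernel n l).aestronglyMeasurable
    (ae_restrict_of_forall_mem measurableSet_uIoc fun t ht => ?_)
  rw [uIoc_of_le zero_le_one] at ht
  exact (norm_legendreKernel_le_of_mem_ball n hl (Metric.mem_ball_self (by linarith))
    (Ioc_subset_Icc_self ht)).trans (le_norm_self _)

lemma hasDerivAt_legendreMoment (n : ℕ) {l : ℝ} (hl : l < 1) :
    HasDerivAt (legendreMoment n) ((n + 1 / 2) * legendreMoment (n + 1) l) l := by
  have hδ : 0 < (1 - l) / 2 := by linarith
  have hderiv := (hasDerivAt_integral_of_dominated_loc_of_deriv_le (a := 0) (b := 1)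
    (F' := fun x t => (n + 1 / 2 : ℝ) * legendreKernel (n + 1) x t)
    (bound := fun t => (n + 1 / 2 : ℝ) *
      (min 1 ((1 - l) / 2) ^ (-((n + 1 : ℕ) + 1 / 2 : ℝ)) * (1 / √(1 - t ^ 2))))
    (Metric.ball_mem_nhds l hδ)
    (Eventually.of_forall fun x => (measurable_legendreKernel n x).aestronglyMeasurable)
    (intervalIntegrable_legendreKernel n hl)
    ((measurable_legendreKernel (n + 1) l).aestronglyMeasurable.const_mul _)
    (Eventually.of_forall fun t ht x hx => ?_)
    ((intervalIntegrable_one_div_sqrt_one_sub_sq.const_mul _).const_mul _)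
    (Eventually.of_forall fun t ht x hx => ?_)).2
  · rwa [intervalIntegral.integral_const_mul] at hderiv
  · rw [uIoc_of_le zero_le_one] at ht
    rw [norm_mul, Real.norm_of_nonneg (by positivity)]
    exact mul_le_mul_of_nonneg_left
      (norm_legendreKernel_le_of_mem_ball _ hl hx (Ioc_subset_Icc_self ht)) (by positivity)
  · rw [uIoc_of_le zero_le_one] at ht
    exact hasDerivAt_legendreKernel n ((lt_min one_pos hδ).trans_le
      (min_le_one_sub_mul_sq hx (Ioc_subset_Icc_self ht)))

noncomputable def legendreBoundary (l t : ℝ) : ℝ :=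
  -4 * t * √(1 - t ^ 2) * (1 - l * t ^ 2) ^ (-(3 / 2 : ℝ))

lemma hasDerivAt_legendreBoundary {l t : ℝ} (hl : l < 1) (ht : t ∈ Ioo (0:ℝ) 1) :
    HasDerivAt (legendreBoundary l)
      (12 * l * (1 - l) * legendreKernel 2 l t + 8 * (1 - 2 * l) * legendreKernel 1 l t
        - 4 * legendreKernel 0 l t) t := by
  have hs : 0 < 1 - t ^ 2 := by nlinarith [ht.1, ht.2]
  have ha := one_sub_mul_sq_pos hl (Ioo_subset_Icc_self ht)
  have hsqrt : HasDerivAt (fun s => √(1 - s ^ 2)) (-2 * t / (2 * √(1 - t ^ 2))) t := by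
    refine (HasDerivAt.sqrt ?_ hs.ne')
    simpa using (hasDerivAt_pow 2 t).const_sub 1
  have hrpow : HasDerivAt (fun s => (1 - l * s ^ 2) ^ (-(3 / 2 : ℝ)))
      (-2 * l * t * (-(3 / 2)) * (1 - l * t ^ 2) ^ (-(3 / 2 : ℝ) - 1)) t := by
    refine HasDerivAt.rpow_const ?_ (Or.inl ha.ne')
    refine (((hasDerivAt_pow 2 t).const_mul l).const_sub 1).congr_deriv ?_
    ring
  refine ((((hasDerivAt_id t).const_mul (-4)).mul hsqrt).mul hrpow).congr_deriv ?_
  simp only [legendreKernel, Pi.mul_apply, id]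
  set a := 1 - l * t ^ 2 with ha_def
  set r := a ^ (-(3 / 2 : ℝ)) with hr
  have hk0 : a ^ (-((0 : ℕ) + 1 / 2 : ℝ)) = r * a := by
    rw [← rpow_add_one ha.ne']; norm_num
  have hk1 : a ^ (-((1 : ℕ) + 1 / 2 : ℝ)) = r := by norm_num [hr]
  have hk2 : a ^ (-((2 : ℕ) + 1 / 2 : ℝ)) = r / a := by
    rw [← rpow_sub_one ha.ne']; norm_num
  have hsq : √(1 - t ^ 2) ^ 2 = 1 - t ^ 2 := sq_sqrt hs.le
  rw [hk0, hk1, hk2, rpow_sub_one ha.ne']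
  field_simp
  rw [hsq, ← hr, ha_def]
  ring

lemma continuousOn_legendreBoundary {l : ℝ} (hl : l < 1) :
    ContinuousOn (legendreBoundary l) (Icc 0 1) := by
  refine (Continuous.continuousOn (by fun_prop)).mul (ContinuousOn.rpow_const (by fun_prop) ?_)
  exact fun t ht => Or.inl (one_sub_mul_sq_pos hl ht).ne'

theorem legendreMoment_picardFuchs {l : ℝ} (hl : l < 1) :
    12 * l * (1 - l) * legendreMoment 2 l + 8 * (1 - 2 * l) * legendreMoment 1 l
      - 4 * legendreMoment 0 l = 0 := by
  have hK : ∀ n, IntervalIntegrable (legendreKernel n l) volume 0 1 :=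
    fun n => intervalIntegrable_legendreKernel n hl
  have hFTC := integral_eq_sub_of_hasDerivAt_of_le zero_le_one (continuousOn_legendreBoundary hl)
    (fun t ht => hasDerivAt_legendreBoundary hl ht)
    ((((hK 2).const_mul _).add ((hK 1).const_mul _)).sub ((hK 0).const_mul _))
  rw [integral_sub (((hK 2).const_mul _).add ((hK 1).const_mul _)) ((hK 0).const_mul _),
    integral_add ((hK 2).const_mul _) ((hK 1).const_mul _)] at hFTC
  simpa [legendreBoundary, legendreMoment] using hFTC

lemma psiPeriod_eq_legendreMoment {l : ℝ} (h0 : 0 ≤ l) (h1 : l ≤ 1) :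
    psiPeriod l = 4 * legendreMoment 0 l := by
  rw [psiPeriod, Kint, legendreMoment]
  congr 1
  refine integral_congr fun t ht => ?_
  rw [uIcc_of_le zero_le_one] at ht
  have hs : 0 ≤ 1 - t ^ 2 := by nlinarith [ht.1, ht.2]
  have ha : 0 ≤ 1 - l * t ^ 2 := by nlinarith [ht.1, ht.2]
  rw [sq_sqrt h0]
  simp [legendreKernel, sqrt_mul hs, sqrt_eq_rpow, rpow_neg ha]
  ring

theorem picard_fuchs_legendre (l : ℝ) (h0 : 0 < l) (h1 : l < 1) :
    4 * l * (1 - l) * deriv (deriv psiPeriod) l +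
      4 * (1 - 2 * l) * deriv psiPeriod l - psiPeriod l = 0 := by
  have hψ : EqOn psiPeriod (fun y => 4 * legendreMoment 0 y) (Ioo 0 1) :=
    fun y hy => psiPeriod_eq_legendreMoment hy.1.le hy.2.le
  have hψ' : EqOn (deriv psiPeriod) (fun y => 2 * legendreMoment 1 y) (Ioo 0 1) := by
    intro y hy
    rw [(hψ.eventuallyEq_of_mem (Ioo_mem_nhds hy.1 hy.2)).deriv_eq,
      ((hasDerivAt_legendreMoment 0 hy.2).const_mul 4).deriv]
    push_cast
    ring
  have hψ'' : deriv (deriv psiPeriod) l = 3 * legendreMoment 2 l := by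
    rw [(hψ'.eventuallyEq_of_mem (Ioo_mem_nhds h0 h1)).deriv_eq,
      ((hasDerivAt_legendreMoment 1 h1).const_mul 2).deriv]
    push_cast
    ring
  rw [hψ'', hψ' ⟨h0, h1⟩, hψ ⟨h0, h1⟩]
  linear_combination legendreMoment_picardFuchs h1
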